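/- Tail estimate for Legendre coefficients under integration: let (a_n)_{n≥0} and (b_n)_{n≥1} be real sequences related by b_n = a_{n-1}/(2n-1) - a_{n+1}/(2n+3) for n ≥ 1. Then for every integer M ≥ 1, Σ_{n=M+1}^{∞} b_n²/(2n+1) ≤ Σ_{n=M}^{M+1} 2 a_n² / ((2n+3)(2n+1)²) + ω Σ_{n=M+2}^{∞} a_n²/(2n+1), where ω = 4/((2M+1)(2M+5)), provided the right-hand side series converges. -/

import Mathlib

/-!
Writing `n = m + 1`, the recursion reads `b (m+1) = a m / (2m+1) - a (m+2) / (2m+5)`, so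
`(x - y)² ≤ 2 (x² + y²)` bounds `b (m+1)² / (2m+3)` by a term in `a m` plus a term in
`a (m+2)`.
Summed over `m ≥ M`, the two terms belonging to the same `a n`, `n ≥ M + 2`, add up to
`4 a n² / ((2n-1)(2n+1)(2n+3)) ≤ ω a n² / (2n+1)`; only the first terms for `n = M, M+1`
are left unpaired.
-/

open Finset

lemma tsum_le_of_le_add_of_shift_le {f u v w : ℕ → ℝ} (hf : ∀ k, 0 ≤ f k)
    (hu : ∀ k, 0 ≤ u k) (hv : ∀ k, 0 ≤ v k) (hle : ∀ k, f k ≤ u k + v k)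
    (hshift : ∀ k, u (k + 2) + v k ≤ w k) (hw : Summable w) :
    ∑' k, f k ≤ u 0 + u 1 + ∑' k, w k := by
  have hu₂ : Summable fun k => u (k + 2) :=
    hw.of_nonneg_of_le (fun k => hu _) fun k => by linarith [hshift k, hv k]
  have hv' : Summable v :=
    hw.of_nonneg_of_le hv fun k => by linarith [hshift k, hu (k + 2)]
  have hu' : Summable u := (summable_nat_add_iff 2).mp hu₂
  calc ∑' k, f k ≤ ∑' k, (u k + v k) :=
        (hu'.add hv').of_nonneg_of_le hf hle |>.tsum_le_tsum hle (hu'.add hv')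
    _ = u 0 + u 1 + ∑' k, (u (k + 2) + v k) := by
        rw [hu'.tsum_add hv', ← hu'.sum_add_tsum_nat_add 2, hu₂.tsum_add hv',
          sum_range_succ, sum_range_one, add_assoc]
    _ ≤ u 0 + u 1 + ∑' k, w k := add_le_add_right ((hu₂.add hv').tsum_le_tsum hshift hw) _

lemma sq_div_le_of_eq_sub_div {a b : ℕ → ℝ} {n : ℕ}
    (hb : b (n + 1) =
      a n / (2 * ((n + 1 : ℕ) : ℝ) - 1) - a (n + 2) / (2 * ((n + 1 : ℕ) : ℝ) + 3)) :
    b (n + 1) ^ 2 / (2 * ((n + 1 : ℕ) : ℝ) + 1)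
      ≤ 2 * a n ^ 2 / ((2 * (n : ℝ) + 3) * (2 * (n : ℝ) + 1) ^ 2)
        + 2 * a (n + 2) ^ 2
          / ((2 * ((n + 2 : ℕ) : ℝ) - 1) * (2 * ((n + 2 : ℕ) : ℝ) + 1) ^ 2) := by
  have hx : (0 : ℝ) ≤ n := n.cast_nonneg
  rw [hb]
  push_cast
  have h1 : (0 : ℝ) < 2 * n + 1 := by linarith
  have h3 : (0 : ℝ) < 2 * n + 3 := by linarith
  have h5 : (0 : ℝ) < 2 * n + 5 := by linarith
  calc (a n / (2 * (n + 1) - 1) - a (n + 2) / (2 * (n + 1) + 3)) ^ 2 / (2 * (n + 1) + 1)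
      ≤ 2 * ((a n / (2 * n + 1)) ^ 2 + (a (n + 2) / (2 * n + 5)) ^ 2) / (2 * n + 3) := by
        rw [show (2 : ℝ) * (n + 1) - 1 = 2 * n + 1 by ring,
          show (2 : ℝ) * (n + 1) + 3 = 2 * n + 5 by ring,
          show (2 : ℝ) * (n + 1) + 1 = 2 * n + 3 by ring, sub_eq_add_neg,
          ← neg_sq (_ / (2 * _ + 5))]
        gcongr
        exact add_sq_le
    _ = _ := by
        rw [show (2 : ℝ) * (n + 2) - 1 = 2 * n + 3 by ring,
          show (2 : ℝ) * (n + 2) + 1 = 2 * n + 5 by ring]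
        field_simp

lemma two_div_add_two_div_le (A M y : ℝ) (hM : 0 ≤ M) (hy : M + 2 ≤ y) :
    2 * A ^ 2 / ((2 * y + 3) * (2 * y + 1) ^ 2) + 2 * A ^ 2 / ((2 * y - 1) * (2 * y + 1) ^ 2)
      ≤ 4 / ((2 * M + 1) * (2 * M + 5)) * (A ^ 2 / (2 * y + 1)) := by
  have h1 : 0 < 2 * y + 1 := by linarith
  have hm1 : 0 < 2 * y - 1 := by linarith
  have h3 : 0 < 2 * y + 3 := by linarith
  have hM1 : 0 < 2 * M + 1 := by linarith
  have hsum : 2 * A ^ 2 / ((2 * y + 3) * (2 * y + 1) ^ 2)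
      + 2 * A ^ 2 / ((2 * y - 1) * (2 * y + 1) ^ 2)
      = 4 / ((2 * y - 1) * (2 * y + 3)) * (A ^ 2 / (2 * y + 1)) := by
    field_simp; ring
  rw [hsum]
  gcongr ?_ * _
  exact div_le_div_of_nonneg_left zero_le_four (by positivity) (by nlinarith)

theorem legendre_tail_recursion_estimate_general (a b : ℕ → ℝ)
    (hrel : ∀ n : ℕ, 1 ≤ n →
      b n = a (n - 1) / (2 * (n : ℝ) - 1) - a (n + 1) / (2 * (n : ℝ) + 3))
    (M : ℕ)
    (hsum : Summable (fun n : ℕ => a n ^ 2 / (2 * (n : ℝ) + 1))) :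
    ∑' k : ℕ, b (k + M + 1) ^ 2 / (2 * ((k + M + 1 : ℕ) : ℝ) + 1)
      ≤ (∑ n ∈ Finset.Icc M (M + 1),
            2 * a n ^ 2 / ((2 * (n : ℝ) + 3) * (2 * (n : ℝ) + 1) ^ 2))
        + 4 / ((2 * (M : ℝ) + 1) * (2 * (M : ℝ) + 5))
            * ∑' k : ℕ, a (k + M + 2) ^ 2 / (2 * ((k + M + 2 : ℕ) : ℝ) + 1) := by
  set ω : ℝ := 4 / ((2 * (M : ℝ) + 1) * (2 * (M : ℝ) + 5))
  set u : ℕ → ℝ := fun n => 2 * a n ^ 2 / ((2 * (n : ℝ) + 3) * (2 * (n : ℝ) + 1) ^ 2)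
  set v : ℕ → ℝ := fun n => 2 * a n ^ 2 / ((2 * (n : ℝ) - 1) * (2 * (n : ℝ) + 1) ^ 2)
  have hle (k : ℕ) :
      b (k + M + 1) ^ 2 / (2 * ((k + M + 1 : ℕ) : ℝ) + 1) ≤ u (k + M) + v (k + M + 2) :=
    sq_div_le_of_eq_sub_div (by simpa using hrel (k + M + 1) (by omega))
  have hM2 (k : ℕ) : (M : ℝ) + 2 ≤ ((k + M + 2 : ℕ) : ℝ) := by
    push_cast
    linarith [k.cast_nonneg (α := ℝ)]
  have hv (k : ℕ) : 0 ≤ v (k + M + 2) :=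
    div_nonneg (by positivity)
      (mul_nonneg (by linarith [hM2 k, M.cast_nonneg (α := ℝ)]) (sq_nonneg _))
  have hshift (k : ℕ) : u (k + 2 + M) + v (k + M + 2)
      ≤ ω * (a (k + M + 2) ^ 2 / (2 * ((k + M + 2 : ℕ) : ℝ) + 1)) := by
    rw [show k + 2 + M = k + M + 2 by omega]
    exact two_div_add_two_div_le _ _ _ M.cast_nonneg (hM2 k)
  have key := tsum_le_of_le_add_of_shift_le (fun k => by positivity) (fun k => by positivity) hv
    hle hshift (((summable_nat_add_iff (M + 2)).mpr hsum).mul_left ω)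
  rw [tsum_mul_left] at key
  convert key using 2
  rw [sum_Icc_succ_top (by omega), Icc_self, sum_singleton]
  simp only [u, zero_add, add_comm 1 M]

theorem legendre_tail_recursion_estimate (a b : ℕ → ℝ)
    (hrel : ∀ n : ℕ, 1 ≤ n →
      b n = a (n - 1) / (2 * (n : ℝ) - 1) - a (n + 1) / (2 * (n : ℝ) + 3))
    (M : ℕ) (hM : 1 ≤ M)
    (hsum : Summable (fun n : ℕ => a n ^ 2 / (2 * (n : ℝ) + 1))) :
    ∑' k : ℕ, b (k + M + 1) ^ 2 / (2 * ((k + M + 1 : ℕ) : ℝ) + 1)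
      ≤ (∑ n ∈ Finset.Icc M (M + 1),
            2 * a n ^ 2 / ((2 * (n : ℝ) + 3) * (2 * (n : ℝ) + 1) ^ 2))
        + 4 / ((2 * (M : ℝ) + 1) * (2 * (M : ℝ) + 5))
            * ∑' k : ℕ, a (k + M + 2) ^ 2 / (2 * ((k + M + 2 : ℕ) : ℝ) + 1) :=
  legendre_tail_recursion_estimate_general a b hrel M hsum
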